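/- arXiv:math/0009257 — 3 statements merged into one kernel-verified Lean document; each statement's English description precedes it below -/
import Mathlib

section
/- Let q be a prime power, n coprime to q and not divisible by 3, α of order n over F_q, and C a cyclic code of length n over F_q whose defining set contains {0, 1, 3, 4}. Then the minimum distance of C is at least 4. -/
lemma key_cube {K : Type*} [Field K] {x y z a b c : K} (ha : a ≠ 0)
    (hxy : x ≠ y) (hxz : x ≠ z) (hyz : y ≠ z)
    (e0 : a + b + c = 0) (e1 : a*x + b*y + c*z = 0)
    (e3 : a*x^3 + b*y^3 + c*z^3 = 0) (e4 : a*x^4 + b*y^4 + c*z^4 = 0) :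
    x^3 = y^3 := by
  have h1 : a*(x-z) + b*(y-z) = 0 := by linear_combination e1 - z*e0
  have h3 : a*(x^3-z^3) + b*(y^3-z^3) = 0 := by linear_combination e3 - z^3*e0
  have h4 : a*(x^4-z^4) + b*(y^4-z^4) = 0 := by linear_combination e4 - z^4*e0
  have hne : a*(x-z)*(y-z)*(x-y) ≠ 0 := by
    apply mul_ne_zero; apply mul_ne_zero; apply mul_ne_zero ha
    · exact sub_ne_zero.mpr hxz
    · exact sub_ne_zero.mpr hyz
    · exact sub_ne_zero.mpr hxy
  have hs1 : x + y + z = 0 := by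
    have hA : a*(x-z)*(y-z)*(x-y)*(x+y+z) = 0 := by
      linear_combination (y-z)*h3 - (y^3-z^3)*h1
    rcases mul_eq_zero.mp hA with h | h
    · exact absurd h hne
    · exact h
  have hs2 : x^2+y^2+z^2+x*y+y*z+z*x = 0 := by
    have hB : a*(x-z)*(y-z)*(x-y)*(x^2+y^2+z^2+x*y+y*z+z*x) = 0 := by
      linear_combination (y-z)*h4 - (y^4-z^4)*h1
    rcases mul_eq_zero.mp hB with h | h
    · exact absurd h hne
    · exact h
  linear_combination (x-y)*hs2 - (x-y)*z*hs1

/-- If the defining set of a cyclic code of length `n` over `F_q` contains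
`{0, 1, 3, 4}` and `3 ∤ n`, then the minimum distance is at least `4`:
every nonzero codeword has Hamming weight `≥ 4`. -/
theorem cyclic_code_min_dist (Fq : Type*) [Field Fq] [Fintype Fq]
    (n : ℕ) (hn : 0 < n) (hcop : Nat.Coprime n (Fintype.card Fq))
    (h3 : ¬ (3 ∣ n))
    (α : AlgebraicClosure Fq) (hα : orderOf α = n)
    (S : Finset ℕ) (hS : ({0, 1, 3, 4} : Finset ℕ) ⊆ S)
    (c : Polynomial Fq) (hc : c ≠ 0) (hdeg : c.natDegree < n)
    (hroot : ∀ i ∈ S, Polynomial.aeval (α ^ i) c = 0) :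
    4 ≤ c.support.card := by
  by_contra hlt
  push_neg at hlt
  have hα1 : α ^ n = 1 := hα ▸ pow_orderOf_eq_one α
  have hα0 : α ≠ 0 := by
    intro h; rw [h, zero_pow hn.ne'] at hα1; exact zero_ne_one hα1
  -- powers of α detect congruence mod n
  have hpow : ∀ {i j : ℕ}, α ^ i = α ^ j → i ≡ j [MOD n] := by
    intro i j hij
    set u : (AlgebraicClosure Fq)ˣ := Units.mk0 α hα0 with hu
    have horder : orderOf u = n := by rw [← hα, ← orderOf_units]; rfl
    have : u ^ i = u ^ j := by
      ext; push_cast; exact hij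
    rw [← horder]
    exact pow_eq_pow_iff_modEq.mp this
  have hltn : ∀ i ∈ c.support, i < n := fun i hi =>
    lt_of_le_of_lt (Polynomial.le_natDegree_of_mem_supp i hi) hdeg
  have hinj : ∀ i ∈ c.support, ∀ j ∈ c.support, α ^ i = α ^ j → i = j := by
    intro i hi j hj hij
    have h := hpow hij
    have : i % n = j % n := h
    rwa [Nat.mod_eq_of_lt (hltn i hi), Nat.mod_eq_of_lt (hltn j hj)] at this
  have hcoef : ∀ i ∈ c.support, algebraMap Fq (AlgebraicClosure Fq) (c.coeff i) ≠ 0 := by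
    intro i hi
    rw [map_ne_zero]
    exact Polynomial.mem_support_iff.mp hi
  have key : ∀ s ∈ S, ∑ i ∈ c.support, algebraMap Fq (AlgebraicClosure Fq) (c.coeff i) * (α ^ s) ^ i = 0 := by
    intro s hs
    have h := hroot s hs
    rwa [Polynomial.aeval_def, Polynomial.eval₂_eq_sum, Polynomial.sum_def] at h
  have h0S : (0:ℕ) ∈ S := hS (by decide)
  have h1S : (1:ℕ) ∈ S := hS (by decide)
  have h3S : (3:ℕ) ∈ S := hS (by decide)
  have h4S : (4:ℕ) ∈ S := hS (by decide)
  have hne0 : c.support.card ≠ 0 := by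
    simpa [Finset.card_eq_zero, Polynomial.support_eq_empty] using hc
  rcases (show c.support.card = 1 ∨ c.support.card = 2 ∨ c.support.card = 3 by omega)
    with h | h | h
  · -- weight 1
    obtain ⟨i, hi⟩ := Finset.card_eq_one.mp h
    have hmem : i ∈ c.support := hi ▸ Finset.mem_singleton_self i
    have e0 := key 0 h0S
    rw [hi, Finset.sum_singleton] at e0
    simp only [pow_zero, one_pow, mul_one] at e0
    exact hcoef i hmem e0
  · -- weight 2
    obtain ⟨i, j, hij, hsup⟩ := Finset.card_eq_two.mp h
    have hmi : i ∈ c.support := by rw [hsup]; simp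
    have hmj : j ∈ c.support := by rw [hsup]; simp
    have e0 := key 0 h0S
    have e1 := key 1 h1S
    rw [hsup, Finset.sum_insert (by simp [hij]), Finset.sum_singleton] at e0 e1
    simp only [pow_zero, one_pow, mul_one, pow_one] at e0 e1
    have hxy : α ^ i ≠ α ^ j := fun hh => hij (hinj i hmi j hmj hh)
    have : algebraMap Fq (AlgebraicClosure Fq) (c.coeff i) * (α ^ i - α ^ j) = 0 := by
      linear_combination e1 - (α ^ j) * e0
    rcases mul_eq_zero.mp this with hh | hh
    · exact hcoef i hmi hh
    · exact hxy (sub_eq_zero.mp hh)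
  · -- weight 3
    obtain ⟨i, j, k, hij, hik, hjk, hsup⟩ := Finset.card_eq_three.mp h
    have hmi : i ∈ c.support := by rw [hsup]; simp
    have hmj : j ∈ c.support := by rw [hsup]; simp
    have hmk : k ∈ c.support := by rw [hsup]; simp
    have e0 := key 0 h0S
    have e1 := key 1 h1S
    have e3' := key 3 h3S
    have e4' := key 4 h4S
    rw [hsup, Finset.sum_insert (by simp [hij, hik]),
      Finset.sum_insert (by simp [hjk]), Finset.sum_singleton] at e0 e1 e3' e4'
    simp only [pow_zero, one_pow, mul_one, pow_one] at e0 e1 e3' e4'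
    set a := algebraMap Fq (AlgebraicClosure Fq) (c.coeff i) with ha
    set b := algebraMap Fq (AlgebraicClosure Fq) (c.coeff j)
    set c' := algebraMap Fq (AlgebraicClosure Fq) (c.coeff k)
    have E3 : a*(α^i)^3 + b*(α^j)^3 + c'*(α^k)^3 = 0 := by
      rw [← pow_mul, ← pow_mul, ← pow_mul, mul_comm 3 i, mul_comm 3 j, mul_comm 3 k,
        pow_mul, pow_mul, pow_mul] at e3'
      linear_combination e3'
    have E4 : a*(α^i)^4 + b*(α^j)^4 + c'*(α^k)^4 = 0 := by
      rw [← pow_mul, ← pow_mul, ← pow_mul, mul_comm 4 i, mul_comm 4 j, mul_comm 4 k,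
        pow_mul, pow_mul, pow_mul] at e4'
      linear_combination e4'
    have hxy : α ^ i ≠ α ^ j := fun hh => hij (hinj i hmi j hmj hh)
    have hxz : α ^ i ≠ α ^ k := fun hh => hik (hinj i hmi k hmk hh)
    have hyz : α ^ j ≠ α ^ k := fun hh => hjk (hinj j hmj k hmk hh)
    have E0 : a + b + c' = 0 := by linear_combination e0
    have E1 : a*(α^i) + b*(α^j) + c'*(α^k) = 0 := by linear_combination e1
    have ha' : a ≠ 0 := hcoef i hmi
    have hcube : (α ^ i) ^ 3 = (α ^ j) ^ 3 :=
      key_cube ha' hxy hxz hyz E0 E1 E3 E4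
    -- derive contradiction from 3 ∤ n
    rw [← pow_mul, ← pow_mul] at hcube
    have hmod := hpow hcube
    rw [mul_comm i 3, mul_comm j 3] at hmod
    have hcop3 : Nat.Coprime 3 n := (Nat.prime_three.coprime_iff_not_dvd).mpr h3
    have hij' : i ≡ j [MOD n] := hmod.cancel_left_of_coprime hcop3.symm
    have : i % n = j % n := hij'
    rw [Nat.mod_eq_of_lt (hltn i hmi), Nat.mod_eq_of_lt (hltn j hmj)] at this
    exact hij this
end

section
/- Let r ≡ 1 (mod 3) with r ≥ 4. With F_r(x_1, x_2) defined as the substitution x_3 = −x_1 − x_2 into f[{0,1,r}] = Δ[{0,1,r}]/Δ_3, the polynomial x_1² + x_1x_2 + x_2² divides F_r in Q[x_1, x_2]. -/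
open MvPolynomial

/-- `Δ[{0,1,r}]` with `x₃ = -x₁ - x₂` substituted, as a polynomial in `ℚ[x₁, x₂]`. -/
noncomputable def DeltaSub (r : ℕ) : MvPolynomial (Fin 2) ℚ :=
  (Matrix.of ![![1, 1, 1], ![X 0, X 1, -X 0 - X 1],
    ![(X 0) ^ r, (X 1) ^ r, (-X 0 - X 1) ^ r]]).det

/-- The Vandermonde determinant `Δ₃ = (x₂-x₁)(x₃-x₁)(x₃-x₂)` with `x₃ = -x₁-x₂`. -/
noncomputable def VandSub : MvPolynomial (Fin 2) ℚ :=
  (X 1 - X 0) * ((-X 0 - X 1) - X 0) * ((-X 0 - X 1) - X 1)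

namespace FrAux
noncomputable abbrev K : Type := CyclotomicField 3 ℚ
noncomputable def ω : K := @IsCyclotomicExtension.zeta 3 _ ℚ (CyclotomicField 3 ℚ) _ _ _ (CyclotomicField.isCyclotomicExtension 3 ℚ)

lemma hωprim : IsPrimitiveRoot ω 3 := @IsCyclotomicExtension.zeta_spec 3 _ ℚ _ _ _ _ (CyclotomicField.isCyclotomicExtension 3 ℚ)

lemma hω3 : ω ^ 3 = 1 := hωprim.pow_eq_one

lemma hω1 : ω ≠ 1 := hωprim.ne_one (by norm_num)

lemma hsum : ω ^ 2 + ω + 1 = 0 := by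
  have h : (ω - 1) * (ω ^ 2 + ω + 1) = 0 := by linear_combination hω3
  rcases mul_eq_zero.mp h with h' | h'
  · exact absurd (by linear_combination h') hω1
  · exact h'

lemma hω0 : ω ≠ 0 := fun h => by simpa [h] using hω3

lemma hω2ne1 : ω ^ 2 ≠ 1 := by
  intro h
  exact hω1 (by linear_combination hω3 - ω * h)

lemma hω2neω : ω ^ 2 ≠ ω := by
  intro h
  exact hω1 (by linear_combination (-(ω+1)) * h + hω3)

lemma hnotrat (q : ℚ) : algebraMap ℚ K q ≠ ω := by
  intro h
  have hq3 : q ^ 3 = 1 := by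
    have := hω3
    rw [← h, ← map_pow, ← map_one (algebraMap ℚ K)] at this
    exact (algebraMap ℚ K).injective this
  have : q = 1 := by nlinarith [sq_nonneg (q + 1), sq_nonneg (q - 1), sq_nonneg q]
  exact hω1 (by rw [← h, this, map_one])

noncomputable def jj : MvPolynomial (Fin 1) ℚ ≃ₐ[ℚ] Polynomial ℚ :=
  (MvPolynomial.finSuccEquiv ℚ 0).trans (Polynomial.mapAlgEquiv (MvPolynomial.isEmptyAlgEquiv ℚ (Fin 0)))

noncomputable def ι : MvPolynomial (Fin 1) ℚ →+* Polynomial K :=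
  (Polynomial.mapRingHom (algebraMap ℚ K)).comp jj.toAlgHom.toRingHom

lemma ι_X : ι (MvPolynomial.X 0) = Polynomial.X := by
  simp [ι, jj, MvPolynomial.finSuccEquiv_X_zero]

lemma ι_inj : Function.Injective ι :=
  (Polynomial.map_injective _ ((algebraMap ℚ K).injective)).comp jj.injective

noncomputable def Φ : Polynomial (MvPolynomial (Fin 1) ℚ) →+* Polynomial K :=
  Polynomial.eval₂RingHom ι (Polynomial.C ω * Polynomial.X)

noncomputable def Ψ : MvPolynomial (Fin 2) ℚ →+* Polynomial K :=
  Φ.comp (MvPolynomial.finSuccEquiv ℚ 1).toAlgHom.toRingHom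

lemma Φ_C (a : MvPolynomial (Fin 1) ℚ) : Φ (Polynomial.C a) = ι a := by
  simp [Φ]

lemma Φ_X : Φ Polynomial.X = Polynomial.C ω * Polynomial.X := by
  simp [Φ]

lemma Ψ_X0 : Ψ (MvPolynomial.X 0) = Polynomial.C ω * Polynomial.X := by
  simp [Ψ, MvPolynomial.finSuccEquiv_X_zero, Φ_X]

lemma Ψ_X1 : Ψ (MvPolynomial.X 1) = Polynomial.X := by
  show Φ ((MvPolynomial.finSuccEquiv ℚ 1) (MvPolynomial.X (Fin.succ 0))) = Polynomial.X
  rw [MvPolynomial.finSuccEquiv_X_succ, Φ_C, ι_X]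

lemma hs_eq : (- (Polynomial.C ω * Polynomial.X) - Polynomial.X : Polynomial K)
    = Polynomial.C (ω ^ 2) * Polynomial.X := by
  have h : (ω : K) ^ 2 = -ω - 1 := by linear_combination hsum
  rw [h, map_sub, map_neg, Polynomial.C_1]; ring

lemma hωr {r k : ℕ} (hk : r = 3 * k + 1) : ω ^ r = ω := by
  rw [hk, pow_succ, pow_mul, hω3, one_pow, one_mul]

lemma hω2r {r k : ℕ} (hk : r = 3 * k + 1) : (ω ^ 2) ^ r = ω ^ 2 := by
  rw [← pow_mul, mul_comm 2 r, pow_mul, hωr hk]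

lemma ΨΔ {r k : ℕ} (hk : r = 3 * k + 1) : Ψ (DeltaSub r) = 0 := by
  unfold DeltaSub
  rw [Matrix.det_fin_three]
  simp only [Matrix.of_apply, Matrix.cons_val', Matrix.cons_val_zero, Matrix.cons_val_one,
    Matrix.head_cons, Matrix.empty_val', Matrix.cons_val_fin_one, Matrix.head_fin_const,
    Matrix.cons_val_two, Matrix.tail_cons]
  simp only [map_add, map_sub, map_mul, map_neg, map_one, map_pow, Ψ_X0, Ψ_X1]
  rw [hs_eq, mul_pow, mul_pow, ← Polynomial.C_pow, ← Polynomial.C_pow, hωr hk, hω2r hk]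
  ring

lemma ΨV_ne : Ψ VandSub ≠ 0 := by
  have h : Ψ VandSub = ((1 - Polynomial.C ω) * (Polynomial.C (ω ^ 2) - Polynomial.C ω)
      * (Polynomial.C (ω ^ 2) - 1)) * Polynomial.X ^ 3 := by
    unfold VandSub
    simp only [map_mul, map_sub, map_neg, Ψ_X0, Ψ_X1]
    rw [hs_eq]; ring
  rw [h]
  refine mul_ne_zero (mul_ne_zero (mul_ne_zero ?_ ?_) ?_) (pow_ne_zero _ Polynomial.X_ne_zero)
  · rw [sub_ne_zero, ← Polynomial.C_1]
    exact fun hc => hω1 (Polynomial.C_injective hc).symm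
  · rw [sub_ne_zero]
    exact fun hc => hω2neω (Polynomial.C_injective hc)
  · rw [sub_ne_zero, ← Polynomial.C_1]
    exact fun hc => hω2ne1 (Polynomial.C_injective hc)

/-- The quadratic in `(ℚ[x₂])[x₁]`. -/
noncomputable def P : Polynomial (MvPolynomial (Fin 1) ℚ) :=
  Polynomial.X ^ 2 + Polynomial.C (MvPolynomial.X 0) * Polynomial.X
    + Polynomial.C (MvPolynomial.X 0 ^ 2)

lemma P_monic : P.Monic := by
  unfold P; monicity!

lemma P_degree : P.degree = 2 := by
  unfold P; compute_degree!

lemma ΦP : Φ P = 0 := by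
  unfold P
  simp only [map_add, map_mul, map_pow, Φ_C, Φ_X, ι_X]
  have h0 : Polynomial.C (ω ^ 2 + ω + 1) = (0 : Polynomial K) := by rw [hsum]; exact map_zero _
  calc (Polynomial.C ω * Polynomial.X) ^ 2 + Polynomial.X * (Polynomial.C ω * Polynomial.X)
        + Polynomial.X ^ 2
      = Polynomial.C (ω ^ 2 + ω + 1) * Polynomial.X ^ 2 := by
        rw [Polynomial.C_add, Polynomial.C_add, Polynomial.C_pow, Polynomial.C_1]; ring
    _ = 0 := by rw [h0, zero_mul]

lemma eP : (MvPolynomial.finSuccEquiv ℚ 1) ((X 0) ^ 2 + X 0 * X 1 + (X 1) ^ 2 : MvPolynomial (Fin 2) ℚ) = P := by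
  have h1 : ((MvPolynomial.X 1 : MvPolynomial (Fin 2) ℚ)) = MvPolynomial.X (Fin.succ 0) := rfl
  rw [h1]
  simp only [map_add, map_mul, map_pow, MvPolynomial.finSuccEquiv_X_zero,
    MvPolynomial.finSuccEquiv_X_succ]
  unfold P
  rw [← Polynomial.C_pow]
  ring

/-- key linear independence step -/
lemma lin_indep (a b : MvPolynomial (Fin 1) ℚ)
    (h : ι a * (Polynomial.C ω * Polynomial.X) + ι b = 0) : a = 0 ∧ b = 0 := by
  have ha : a = 0 := by
    by_contra ha
    set A : Polynomial K := ι a with hA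
    set B : Polynomial K := ι b with hB
    have hAm : A = (jj a).map (algebraMap ℚ K) := rfl
    have hBm : B = (jj b).map (algebraMap ℚ K) := rfl
    have hjja : jj a ≠ 0 := fun hc => ha (by simpa using jj.injective (by simpa using hc))
    have hAne : A ≠ 0 := by
      rw [hAm]
      exact fun hc => hjja (Polynomial.map_injective _ ((algebraMap ℚ K).injective) (by simpa using hc))
    have heq : Polynomial.C ω * (Polynomial.X * A) = -B := by linear_combination h
    have hlc := congrArg Polynomial.leadingCoeff heq
    rw [Polynomial.leadingCoeff_mul, Polynomial.leadingCoeff_mul, Polynomial.leadingCoeff_C,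
      Polynomial.leadingCoeff_X, one_mul, Polynomial.leadingCoeff_neg] at hlc
    rw [hAm, hBm, Polynomial.leadingCoeff_map, Polynomial.leadingCoeff_map] at hlc
    set qa := (jj a).leadingCoeff with hqa
    set qb := (jj b).leadingCoeff with hqb
    have hqane : qa ≠ 0 := Polynomial.leadingCoeff_ne_zero.mpr hjja
    have hqane' : algebraMap ℚ K qa ≠ 0 :=
      fun hc => hqane ((algebraMap ℚ K).injective (by rw [hc, map_zero]))
    have : algebraMap ℚ K (-qb / qa) = ω := by
      rw [map_div₀, map_neg, div_eq_iff hqane', eq_comm]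
      linear_combination hlc
    exact hnotrat _ this
  refine ⟨ha, ?_⟩
  rw [ha, map_zero, zero_mul, zero_add] at h
  exact ι_inj (by simpa using h)

end FrAux

/-- For `r ≡ 1 (mod 3)`, `r ≥ 4`, the polynomial
`F_r(x₁,x₂) = f[{0,1,r}](x₁, x₂, -x₁-x₂)` is divisible by `x₁² + x₁x₂ + x₂²`
in `ℚ[x₁,x₂]`. -/
theorem Fr_divisibility_one_mod_three (r : ℕ) (hr : 4 ≤ r) (hmod : r % 3 = 1)
    (Fr : MvPolynomial (Fin 2) ℚ) (hFr : DeltaSub r = VandSub * Fr) :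
    ((X 0) ^ 2 + X 0 * X 1 + (X 1) ^ 2 : MvPolynomial (Fin 2) ℚ) ∣ Fr := by
  obtain ⟨k, hk⟩ : ∃ k, r = 3 * k + 1 := ⟨r / 3, by omega⟩
  have hΨFr : FrAux.Ψ Fr = 0 := by
    have h := congrArg FrAux.Ψ hFr
    rw [map_mul, FrAux.ΨΔ hk] at h
    rcases mul_eq_zero.mp h.symm with h' | h'
    · exact absurd h' FrAux.ΨV_ne
    · exact h'
  have hΦg : FrAux.Φ ((MvPolynomial.finSuccEquiv ℚ 1) Fr) = 0 := hΨFr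
  have hmod0 : (MvPolynomial.finSuccEquiv ℚ 1) Fr %ₘ FrAux.P = 0 := by
    have hdiv := Polynomial.modByMonic_add_div ((MvPolynomial.finSuccEquiv ℚ 1) Fr) FrAux.P
    have hΦρ : FrAux.Φ ((MvPolynomial.finSuccEquiv ℚ 1) Fr %ₘ FrAux.P) = 0 := by
      have h := congrArg FrAux.Φ hdiv
      rw [map_add, map_mul, FrAux.ΦP, zero_mul, add_zero, hΦg] at h
      exact h
    have hdeg : ((MvPolynomial.finSuccEquiv ℚ 1) Fr %ₘ FrAux.P).degree ≤ 1 := by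
      have h := Polynomial.degree_modByMonic_lt ((MvPolynomial.finSuccEquiv ℚ 1) Fr) FrAux.P_monic
      rw [FrAux.P_degree] at h
      exact Order.le_of_lt_succ (by exact_mod_cast h)
    have hρ := Polynomial.eq_X_add_C_of_degree_le_one hdeg
    rw [hρ] at hΦρ
    simp only [map_add, map_mul, FrAux.Φ_C, FrAux.Φ_X] at hΦρ
    obtain ⟨ha, hb⟩ := FrAux.lin_indep _ _ hΦρ
    rw [hρ, ha, hb, Polynomial.C_0, zero_mul, zero_add]
  have hPg : FrAux.P ∣ (MvPolynomial.finSuccEquiv ℚ 1) Fr :=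
    (Polynomial.modByMonic_eq_zero_iff_dvd FrAux.P_monic).mp hmod0
  obtain ⟨c, hc⟩ := hPg
  refine ⟨(MvPolynomial.finSuccEquiv ℚ 1).symm c, ?_⟩
  have hsymmP : (MvPolynomial.finSuccEquiv ℚ 1).symm FrAux.P
      = ((X 0) ^ 2 + X 0 * X 1 + (X 1) ^ 2 : MvPolynomial (Fin 2) ℚ) := by
    rw [← FrAux.eP]; exact (MvPolynomial.finSuccEquiv ℚ 1).symm_apply_apply _
  have h2 := congrArg (MvPolynomial.finSuccEquiv ℚ 1).symm hc
  rw [map_mul, hsymmP, AlgEquiv.symm_apply_apply] at h2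
  exact h2
end

section
/- Let r ≡ 0 (mod 3) with r ≥ 3. With F_r(x_1, x_2) defined as above, (x_1² + x_1x_2 + x_2²)² divides F_r in Q[x_1, x_2]. -/
open MvPolynomial

noncomputable def e2P : MvPolynomial (Fin 2) ℚ := (X 0) ^ 2 + X 0 * X 1 + (X 1) ^ 2

noncomputable def e3P : MvPolynomial (Fin 2) ℚ := X 0 * X 1 * (X 0 + X 1)

noncomputable def Hs : ℕ → MvPolynomial (Fin 2) ℚ
  | 0 => 1
  | 1 => 0
  | 2 => e2P
  | (n+3) => e2P * Hs (n+1) - e3P * Hs n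

lemma deltaSub_expand (r : ℕ) :
    DeltaSub r = (X 1 - X 0) * (-X 0 - X 1) ^ r + (-X 0 - X 1) * ((X 0) ^ r - (X 1) ^ r)
      + X 0 * (X 1) ^ r - X 1 * (X 0) ^ r := by
  simp [DeltaSub, Matrix.det_fin_three]
  ring

lemma deltaSub_rec (n : ℕ) :
    DeltaSub (n + 3) = e2P * DeltaSub (n + 1) - e3P * DeltaSub n := by
  simp only [deltaSub_expand, e2P, e3P, pow_add]
  ring

lemma key : ∀ n, DeltaSub (n + 2) = VandSub * Hs n := by
  intro n
  induction n using Nat.strong_induction_on with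
  | _ n ih =>
    match n with
    | 0 =>
      rw [deltaSub_expand]
      simp only [VandSub, Hs]
      ring
    | 1 =>
      rw [deltaSub_expand]
      simp only [VandSub, Hs]
      ring
    | 2 =>
      rw [deltaSub_expand]
      simp only [VandSub, Hs, e2P]
      ring
    | (n+3) =>
      have h1 := ih (n + 1) (by omega)
      have h0 := ih n (by omega)
      rw [show n + 3 + 2 = (n + 2) + 3 by ring, deltaSub_rec (n + 2),
        show (n + 2) + 1 = (n + 1) + 2 by ring, h1, h0]
      simp only [Hs]
      ring

lemma hdvd : ∀ k, e2P ∣ Hs (3 * k + 2) ∧ e2P ^ 2 ∣ Hs (3 * k + 1) := by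
  intro k
  induction k with
  | zero =>
    refine ⟨?_, ?_⟩
    · simp [Hs]
    · simp [Hs]
  | succ k ih =>
    refine ⟨?_, ?_⟩
    · rw [show 3 * (k + 1) + 2 = (3 * k + 2) + 3 by ring]
      simp only [Hs]
      exact dvd_sub (Dvd.intro _ rfl) (Dvd.dvd.mul_left ih.1 _)
    · rw [show 3 * (k + 1) + 1 = (3 * k + 1) + 3 by ring]
      simp only [Hs]
      rw [show (3 * k + 1) + 1 = 3 * k + 2 by ring]
      refine dvd_sub ?_ (Dvd.dvd.mul_left ih.2 _)
      obtain ⟨c, hc⟩ := ih.1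
      exact ⟨c, by rw [hc]; ring⟩

lemma vand_ne : VandSub ≠ 0 := by
  intro h
  have := congrArg (eval ![(1 : ℚ), 2]) h
  simp [VandSub] at this
  norm_num at this

/-- For `r ≡ 0 (mod 3)`, `r ≥ 3`, the polynomial
`F_r(x₁,x₂) = f[{0,1,r}](x₁, x₂, -x₁-x₂)` is divisible by `(x₁² + x₁x₂ + x₂²)²`
in `ℚ[x₁,x₂]`. -/
theorem Fr_divisibility_zero_mod_three (r : ℕ) (hr : 3 ≤ r) (hmod : r % 3 = 0)
    (Fr : MvPolynomial (Fin 2) ℚ) (hFr : DeltaSub r = VandSub * Fr) :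
    (((X 0) ^ 2 + X 0 * X 1 + (X 1) ^ 2) ^ 2 : MvPolynomial (Fin 2) ℚ) ∣ Fr := by
  obtain ⟨m, rfl⟩ : ∃ m, r = 3 * m := ⟨r / 3, by omega⟩
  have hm : 1 ≤ m := by omega
  have hF : Fr = Hs (3 * (m - 1) + 1) := by
    apply mul_left_cancel₀ vand_ne
    rw [← hFr, show 3 * m = (3 * (m - 1) + 1) + 2 by omega, key]
  show e2P ^ 2 ∣ Fr
  rw [hF]
  exact (hdvd (m - 1)).2
end
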